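/- arXiv:1209.6596 — 3 statements merged into one kernel-verified Lean document; each statement's English description precedes it below -/
import Mathlib

section
/- Define S_T^{(1)} := Σ_{k=0}^{T−1} X_k θ_{1,k}, where θ_{1,k} is the conditional mean number of type-2 daughters per type-1 mother in generation k. Assume E[ζ] = 0 and Var[ζ] ∈ (0,∞); that P[S_T > x] ~ K_0 / log x as x → ∞ for a constant K_0 > 0; that P[T > n] ~ c/√n as n → ∞; and that for some α > 0, P[θ_1 < 1/x] = o((log x)^{-3-α}), P[θ_1 > x] = o((log x)^{-3-α}) as x → ∞. Then P[S_T^{(1)} > x] ~ K_0 / log x as x → ∞. -/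
open MeasureTheory ProbabilityTheory Filter Real Set Asymptotics
open scoped Topology ENNReal

/-!
Truncate at generation `n = ⌈(log x)^(2+α/4)⌉` and at weight level `λ = exp ((log x)^β)` with
`β = (3+α/2)/(3+α) < 1`. Off the event `{T > n} ∪ ⋃_{k<n} {θ_{1,k} ∉ [1/λ, λ]}` one has
`S_T / λ ≤ S_T^{(1)} ≤ λ S_T`. Since `log λ = o(log x)`, rescaling `x` by `λ` leaves `K₀ / log x`
unchanged to first order, while `P[T > n] = O((log x)^(-1-α/8))` and the union bound
`n P[θ₁ ∉ [1/λ, λ]] = o((log x)^(-1-α/4))` are negligible against `1 / log x`.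
-/

lemma isLittleO_rpow_rpow_atTop {a b : ℝ} (hab : a < b) :
    (fun x : ℝ => x ^ a) =o[atTop] fun x => x ^ b := by
  refine (isLittleO_iff_tendsto' ?_).2 ?_
  · filter_upwards [eventually_gt_atTop 0] with x hx h
    exact absurd h (rpow_pos_of_pos hx b).ne'
  · refine ((tendsto_rpow_neg_atTop (sub_pos.2 hab)).congr' ?_)
    filter_upwards [eventually_gt_atTop 0] with x hx
    rw [neg_sub, rpow_sub hx]

lemma tendsto_comp_exp_add_mul_of_tendsto_mul_log {q : ℝ → ℝ} {K : ℝ}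
    (hq : Tendsto (fun x => q x * log x) atTop (𝓝 K)) {u : ℝ → ℝ}
    (hu : u =o[atTop] fun L => L) :
    Tendsto (fun L => q (exp (L + u L)) * L) atTop (𝓝 K) := by
  have hw : (fun L => L + u L) ~[atTop] fun L => L := by
    simpa [IsEquivalent, Pi.sub_def] using hu
  have hqw : Tendsto (fun L => q (exp (L + u L)) * (L + u L)) atTop (𝓝 K) := by
    simpa [Function.comp_def] using
      (hq.comp tendsto_exp_atTop).comp (hw.symm.tendsto_atTop tendsto_id)
  exact ((IsEquivalent.refl (u := fun L => q (exp (L + u L)))).mul hw).tendsto_nhds hqw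

lemma tendsto_natCeil_rpow_mul_comp_exp_rpow_mul {q : ℝ → ℝ} {a b β : ℝ}
    (hq : q =o[atTop] fun x => log x ^ (-a)) (hb : 0 ≤ b) (hβ : 0 < β)
    (hbβa : b + 1 < β * a) :
    Tendsto (fun L => ⌈L ^ b⌉₊ * q (exp (L ^ β)) * L) atTop (𝓝 0) := by
  have hqβ : (fun L => q (exp (L ^ β))) =o[atTop] fun L => L ^ (-(β * a)) := by
    refine (hq.comp_tendsto (tendsto_exp_atTop.comp (tendsto_rpow_atTop hβ))).congr'
      EventuallyEq.rfl ?_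
    filter_upwards [eventually_ge_atTop (0 : ℝ)] with L hL
    simp [← rpow_mul hL]
  have hceil : (fun L : ℝ => (⌈L ^ b⌉₊ : ℝ) * L) =O[atTop] fun L => L ^ (b + 1) := by
    refine IsBigO.of_bound 2 ?_
    filter_upwards [eventually_ge_atTop 1] with L hL
    have hLb : 1 ≤ L ^ b := one_le_rpow hL hb
    rw [norm_mul, RCLike.norm_natCast, norm_of_nonneg (by positivity : 0 ≤ L),
      norm_of_nonneg (by positivity), rpow_add_one (by positivity), ← mul_assoc]
    gcongr
    exact Nat.ceil_le_two_mul (by linarith)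
  refine ((hceil.mul_isLittleO hqβ).trans_tendsto ?_).congr' ?_
  · refine (tendsto_rpow_neg_atTop (sub_pos.2 hbβa)).congr' ?_
    filter_upwards [eventually_gt_atTop 0] with L hL
    rw [← rpow_add hL]; ring_nf
  · exact Eventually.of_forall fun L => by ring

lemma tendsto_comp_natCeil_rpow_mul {p : ℕ → ℝ} {c b : ℝ}
    (hp : Tendsto (fun n : ℕ => p n * √n) atTop (𝓝 c)) (hb : 2 < b) :
    Tendsto (fun L => p ⌈L ^ b⌉₊ * L) atTop (𝓝 0) := by
  have hn : Tendsto (fun L : ℝ => ⌈L ^ b⌉₊) atTop atTop :=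
    tendsto_nat_ceil_atTop.comp (tendsto_rpow_atTop (by linarith))
  have hratio : Tendsto (fun L : ℝ => L / √(⌈L ^ b⌉₊ : ℝ)) atTop (𝓝 0) := by
    refine squeeze_zero' ?_ ?_ (tendsto_rpow_neg_atTop (by linarith : 0 < b / 2 - 1))
    · filter_upwards [eventually_ge_atTop 0] with L hL
      positivity
    · filter_upwards [eventually_gt_atTop 0] with L hL
      calc L / √(⌈L ^ b⌉₊ : ℝ) ≤ L / √(L ^ b) := by
            gcongr
            exact Nat.le_ceil _
        _ = L ^ (-(b / 2 - 1)) := by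
            rw [sqrt_eq_rpow, ← rpow_mul hL.le, neg_sub, rpow_sub hL, rpow_one]; ring_nf
  have hprod := (hp.comp hn).mul hratio
  rw [mul_zero] at hprod
  refine hprod.congr' ?_
  filter_upwards [hn.eventually_ge_atTop 1] with L hL
  have : √(⌈L ^ b⌉₊ : ℝ) ≠ 0 := (sqrt_pos.2 (by exact_mod_cast hL)).ne'
  simp only [Function.comp_apply]
  field_simp

section WeightedSum

variable {Ω : Type*} [MeasurableSpace Ω] {μ : Measure Ω} [IsFiniteMeasure μ]

lemma measureReal_le_add_add_mul_of_subset {A B C : Set Ω} {D : ℕ → Set Ω} {n : ℕ}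
    (hsub : A ⊆ B ∪ C ∪ ⋃ k ∈ Finset.range n, D k) (hD : ∀ k, μ.real (D k) = μ.real (D 0)) :
    μ.real A ≤ μ.real B + μ.real C + n * μ.real (D 0) :=
  calc μ.real A ≤ μ.real (B ∪ C) + μ.real (⋃ k ∈ Finset.range n, D k) :=
        (measureReal_mono hsub).trans (measureReal_union_le _ _)
    _ ≤ μ.real B + μ.real C + ∑ k ∈ Finset.range n, μ.real (D k) :=
        add_le_add (measureReal_union_le _ _) (measureReal_biUnion_finset_le _ _)
    _ = μ.real B + μ.real C + n * μ.real (D 0) := by simp [hD]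

variable {X W : ℕ → Ω → ℝ} {T : Ω → ℕ} {S S1 : Ω → ℝ}

lemma measureReal_lt_weightedSum_le (hX : ∀ k ω, 0 ≤ X k ω)
    (hS : ∀ ω, S ω = ∑ k ∈ Finset.range (T ω), X k ω)
    (hS1 : ∀ ω, S1 ω = ∑ k ∈ Finset.range (T ω), X k ω * W k ω)
    (hW : ∀ k, IdentDistrib (W k) (W 0) μ μ) {x lam : ℝ} (hlam : 0 < lam) (n : ℕ) :
    μ.real {ω | x < S1 ω} ≤
      μ.real {ω | x / lam < S ω} + μ.real {ω | n < T ω} + n * μ.real {ω | lam < W 0 ω} := by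
  refine measureReal_le_add_add_mul_of_subset (D := fun k => {ω | lam < W k ω}) ?_
    fun k => congrArg ENNReal.toReal ((hW k).measure_mem_eq measurableSet_Ioi)
  intro ω hω
  by_contra hout
  simp only [mem_union, mem_ofPred_eq, mem_iUnion, Finset.mem_range, not_or, not_exists,
    not_lt] at hω hout
  obtain ⟨⟨hSle, hTle⟩, hWle⟩ := hout
  refine hω.not_ge ?_
  calc S1 ω ≤ ∑ k ∈ Finset.range (T ω), X k ω * lam := by
        rw [hS1]
        exact Finset.sum_le_sum fun k hk => mul_le_mul_of_nonneg_left
          (hWle k ((Finset.mem_range.1 hk).trans_le hTle)) (hX k ω)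
    _ = S ω * lam := by rw [hS, Finset.sum_mul]
    _ ≤ x := (le_div_iff₀ hlam).1 hSle

lemma measureReal_lt_sum_le (hX : ∀ k ω, 0 ≤ X k ω)
    (hS : ∀ ω, S ω = ∑ k ∈ Finset.range (T ω), X k ω)
    (hS1 : ∀ ω, S1 ω = ∑ k ∈ Finset.range (T ω), X k ω * W k ω)
    (hW : ∀ k, IdentDistrib (W k) (W 0) μ μ) {x lam : ℝ} (hlam : 0 < lam) (n : ℕ) :
    μ.real {ω | x * lam < S ω} ≤
      μ.real {ω | x < S1 ω} + μ.real {ω | n < T ω} + n * μ.real {ω | W 0 ω < 1 / lam} := by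
  refine measureReal_le_add_add_mul_of_subset (D := fun k => {ω | W k ω < 1 / lam}) ?_
    fun k => congrArg ENNReal.toReal ((hW k).measure_mem_eq measurableSet_Iio)
  intro ω hω
  by_contra hout
  simp only [mem_union, mem_ofPred_eq, mem_iUnion, Finset.mem_range, not_or, not_exists,
    not_lt] at hω hout
  obtain ⟨⟨hS1le, hTle⟩, hWge⟩ := hout
  refine hω.not_ge ?_
  calc S ω ≤ ∑ k ∈ Finset.range (T ω), lam * (X k ω * W k ω) := by
        rw [hS]
        refine Finset.sum_le_sum fun k hk => ?_
        have h1 : 1 ≤ lam * W k ω :=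
          (div_le_iff₀' hlam).1 (hWge k ((Finset.mem_range.1 hk).trans_le hTle))
        nlinarith [hX k ω]
    _ = lam * S1 ω := by rw [hS1, Finset.mul_sum]
    _ ≤ x * lam := by rw [mul_comm x]; exact mul_le_mul_of_nonneg_left hS1le hlam.le

theorem tendsto_measureReal_lt_weightedSum_mul_log (hX : ∀ k ω, 0 ≤ X k ω)
    (hS : ∀ ω, S ω = ∑ k ∈ Finset.range (T ω), X k ω)
    (hS1 : ∀ ω, S1 ω = ∑ k ∈ Finset.range (T ω), X k ω * W k ω)
    (hW : ∀ k, IdentDistrib (W k) (W 0) μ μ) {K c α : ℝ}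
    (hStail : Tendsto (fun x => μ.real {ω | x < S ω} * log x) atTop (𝓝 K))
    (hTtail : Tendsto (fun n : ℕ => μ.real {ω | n < T ω} * √n) atTop (𝓝 c)) (hα : 0 < α)
    (hWsmall : (fun x => μ.real {ω | W 0 ω < 1 / x}) =o[atTop] fun x => log x ^ (-(3 + α)))
    (hWlarge : (fun x => μ.real {ω | x < W 0 ω}) =o[atTop] fun x => log x ^ (-(3 + α))) :
    Tendsto (fun x => μ.real {ω | x < S1 ω} * log x) atTop (𝓝 K) := by
  set β := (3 + α / 2) / (3 + α)
  have hβ : 0 < β := by positivity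
  have hβ1 : β < 1 := (div_lt_one (by positivity)).2 (by linarith)
  have hβa : 2 + α / 4 + 1 < β * (3 + α) := by
    rw [div_mul_cancel₀ _ (by positivity)]; linarith
  have hLβ : (fun L : ℝ => L ^ β) =o[atTop] fun L => L := by
    simpa using isLittleO_rpow_rpow_atTop hβ1
  have hT := tendsto_comp_natCeil_rpow_mul hTtail (by linarith : 2 < 2 + α / 4)
  rw [← tendsto_comp_exp_atTop]
  simp only [log_exp]
  have hlower := ((tendsto_comp_exp_add_mul_of_tendsto_mul_log hStail hLβ).sub hT).sub
    (tendsto_natCeil_rpow_mul_comp_exp_rpow_mul hWsmall (by positivity) hβ hβa)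
  have hupper := ((tendsto_comp_exp_add_mul_of_tendsto_mul_log hStail hLβ.neg_left).add hT).add
    (tendsto_natCeil_rpow_mul_comp_exp_rpow_mul hWlarge (by positivity) hβ hβa)
  rw [sub_zero, sub_zero] at hlower
  rw [add_zero, add_zero] at hupper
  refine tendsto_of_tendsto_of_tendsto_of_le_of_le' hlower hupper ?_ ?_
  · filter_upwards [eventually_ge_atTop 0] with L hL
    have h := measureReal_lt_sum_le hX hS hS1 hW (x := exp L) (exp_pos (L ^ β))
      ⌈L ^ (2 + α / 4)⌉₊
    rw [← exp_add] at h
    nlinarith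
  · filter_upwards [eventually_ge_atTop 0] with L hL
    have h := measureReal_lt_weightedSum_le hX hS hS1 hW (x := exp L) (exp_pos (L ^ β))
      ⌈L ^ (2 + α / 4)⌉₊
    rw [← exp_sub, sub_eq_add_neg] at h
    nlinarith

end WeightedSum

theorem weighted_total_progeny_tail_general
    {Ω : Type*} [MeasurableSpace Ω] (μ : Measure Ω) [IsProbabilityMeasure μ]
    {E : Type*} [MeasurableSpace E]
    -- IID environment
    (e : ℕ → Ω → E) (hemeas : ∀ n, Measurable (e n))
    (hident : ∀ n, μ.map (e n) = μ.map (e 0))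
    -- conditional offspring distribution of type-1 particles and its moments
    (p : E → ℕ × ℕ → ℝ)
    (hpmeas : ∀ ij, Measurable fun a => p a ij)
    (Θ1 : E → ℝ)
    (hΘ1 : ∀ a, Θ1 a = ∑' ij : ℕ × ℕ, (ij.2 : ℝ) * p a ij)
    -- the type-1 population process
    (X : ℕ → Ω → ℕ)
    (T : Ω → ℕ)
    (S : Ω → ℕ) (hS : ∀ ω, S ω = ∑ k ∈ Finset.range (T ω), X k ω)
    (S1 : Ω → ℝ) (hS1 : ∀ ω, S1 ω = ∑ k ∈ Finset.range (T ω), (X k ω : ℝ) * Θ1 (e k ω))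
    -- `P[S_T > x] ~ K₀ / log x`
    (K0 : ℝ)
    (hStail : Tendsto (fun x : ℝ => (μ {ω | x < (S ω : ℝ)}).toReal * Real.log x)
      atTop (𝓝 K0))
    -- `P[T > n] ~ c / √n`
    (c : ℝ)
    (hTtail : Tendsto (fun n : ℕ => (μ {ω | n < T ω}).toReal * Real.sqrt n) atTop (𝓝 c))
    -- tail conditions on `θ₁`, for some `α > 0`
    (α : ℝ) (hα : 0 < α)
    (hc0 : (fun x : ℝ => (μ {ω | Θ1 (e 0 ω) < 1 / x}).toReal)
      =o[atTop] fun x : ℝ => Real.log x ^ (-(3 + α)))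
    (hAstheta : (fun x : ℝ => (μ {ω | x < Θ1 (e 0 ω)}).toReal)
      =o[atTop] fun x : ℝ => Real.log x ^ (-(3 + α))) :
    Tendsto (fun x : ℝ => (μ {ω | x < S1 ω}).toReal * Real.log x) atTop (𝓝 K0) := by
  have hΘ1meas : Measurable Θ1 := by
    rw [show Θ1 = _ from funext hΘ1]
    exact Measurable.tsum fun ij => (hpmeas ij).const_mul _
  have hW : ∀ k, IdentDistrib (fun ω => Θ1 (e k ω)) (fun ω => Θ1 (e 0 ω)) μ μ := fun k =>
    (⟨(hemeas k).aemeasurable, (hemeas 0).aemeasurable, hident k⟩ :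
      IdentDistrib (e k) (e 0) μ μ).comp hΘ1meas
  exact tendsto_measureReal_lt_weightedSum_mul_log (X := fun k ω => (X k ω : ℝ))
    (fun _ _ => Nat.cast_nonneg _) (fun ω => by rw [hS]; push_cast; rfl) hS1 hW hStail hTtail
    hα hc0 hAstheta

/-- **Lemma 2, first part.** In the IID-environment setting, let
`S_T^{(1)} := Σ_{k<T} X_k θ_{1,k}`. If `E[ζ] = 0`, `Var ζ ∈ (0,∞)`,
`P[S_T > x] ~ K₀/log x` with `K₀ > 0`, `P[T > n] ~ c/√n`, and for some `α > 0`
`P[θ₁ < 1/x] = o((log x)^{-3-α})` and `P[θ₁ > x] = o((log x)^{-3-α})`,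
then `P[S_T^{(1)} > x] ~ K₀/log x` as `x → ∞`. -/
theorem weighted_total_progeny_tail
    {Ω : Type*} [MeasurableSpace Ω] (μ : Measure Ω) [IsProbabilityMeasure μ]
    {E : Type*} [MeasurableSpace E]
    -- IID environment
    (e : ℕ → Ω → E) (hemeas : ∀ n, Measurable (e n))
    (hiid : iIndepFun e μ)
    (hident : ∀ n, μ.map (e n) = μ.map (e 0))
    -- conditional offspring distribution of type-1 particles and its moments
    (p : E → ℕ × ℕ → ℝ) (hp0 : ∀ a ij, 0 ≤ p a ij) (hp1 : ∀ a, (∑' ij : ℕ × ℕ, p a ij) = 1)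
    (hpmeas : ∀ ij, Measurable fun a => p a ij)
    (M1 Θ1 : E → ℝ)
    (hM1 : ∀ a, M1 a = ∑' ij : ℕ × ℕ, (ij.1 : ℝ) * p a ij)
    (hΘ1 : ∀ a, Θ1 a = ∑' ij : ℕ × ℕ, (ij.2 : ℝ) * p a ij)
    -- the type-1 population process
    (X : ℕ → Ω → ℕ) (hXmeas : ∀ n, Measurable (X n)) (hX0 : ∀ ω, X 0 ω = 1)
    (T : Ω → ℕ) (hT : ∀ ω, T ω = sInf {n | X n ω = 0})
    (S : Ω → ℕ) (hS : ∀ ω, S ω = ∑ k ∈ Finset.range (T ω), X k ω)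
    (S1 : Ω → ℝ) (hS1 : ∀ ω, S1 ω = ∑ k ∈ Finset.range (T ω), (X k ω : ℝ) * Θ1 (e k ω))
    -- criticality: `E[ζ] = 0`, `Var ζ ∈ (0,∞)`
    (hζint : Integrable (fun ω => Real.log (M1 (e 0 ω))) μ)
    (hζmean : (∫ ω, Real.log (M1 (e 0 ω)) ∂μ) = 0)
    (hζvar : evariance (fun ω => Real.log (M1 (e 0 ω))) μ ∈ Set.Ioo 0 ⊤)
    -- `P[S_T > x] ~ K₀ / log x`
    (K0 : ℝ) (hK0 : 0 < K0)
    (hStail : Tendsto (fun x : ℝ => (μ {ω | x < (S ω : ℝ)}).toReal * Real.log x)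
      atTop (𝓝 K0))
    -- `P[T > n] ~ c / √n`
    (c : ℝ) (hc : 0 < c)
    (hTtail : Tendsto (fun n : ℕ => (μ {ω | n < T ω}).toReal * Real.sqrt n) atTop (𝓝 c))
    -- tail conditions on `θ₁`, for some `α > 0`
    (α : ℝ) (hα : 0 < α)
    (hc0 : (fun x : ℝ => (μ {ω | Θ1 (e 0 ω) < 1 / x}).toReal)
      =o[atTop] fun x : ℝ => Real.log x ^ (-(3 + α)))
    (hAstheta : (fun x : ℝ => (μ {ω | x < Θ1 (e 0 ω)}).toReal)
      =o[atTop] fun x : ℝ => Real.log x ^ (-(3 + α))) :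
    Tendsto (fun x : ℝ => (μ {ω | x < S1 ω}).toReal * Real.log x) atTop (𝓝 K0) :=
  weighted_total_progeny_tail_general μ e hemeas hident p hpmeas Θ1 hΘ1 X T S hS S1 hS1 K0 hStail c
    hTtail α hα hc0 hAstheta
end

section
/- Define S_T^{(i)} := Σ_{k=0}^{T−1} X_k θ_{i,k} for i = 1, 2. Assume that for some α > 0, P[θ_2 > x θ_1] = o((log x)^{-3-α}) as x → ∞, where (θ_1, θ_2) is distributed as any (θ_{1,k}, θ_{2,k}) in the IID environment. Then for every fixed ε > 0, P[S_T^{(2)} > n^{ε} S_T^{(1)}; T ≤ (log n)^{2+α}] = o(1/log n) as n → ∞. -/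
/-!
On the event `T ≤ (log n)^(2+α)`, the inequality `S₂ > n^ε S₁` between two sums of at most
`m ≈ (log n)^(2+α)` terms with common weights `X_k ≥ 0` forces `θ_{2,k} > n^ε θ_{1,k}` in one of the
first `m` generations. Since the environments are identically distributed, a union bound gives
probability at most `m · P[θ₂ > n^ε θ₁] = (log n)^(2+α) · o((ε log n)^(-3-α)) = o(1/log n)`.
-/

open MeasureTheory ProbabilityTheory Filter Real Set Asymptotics
open scoped Topology ENNReal

theorem Finset.exists_mul_lt_of_mul_sum_lt {ι : Type*} {s : Finset ι} {w a b : ι → ℝ} {c : ℝ}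
    (hw : ∀ k ∈ s, 0 ≤ w k) (h : c * ∑ k ∈ s, w k * a k < ∑ k ∈ s, w k * b k) :
    ∃ k ∈ s, c * a k < b k := by
  have hsum : ∑ k ∈ s, w k * (c * a k) < ∑ k ∈ s, w k * b k := by
    simpa only [Finset.mul_sum, mul_left_comm c] using h
  obtain ⟨k, hk, hlt⟩ := Finset.exists_lt_of_sum_lt hsum
  exact ⟨k, hk, lt_of_mul_lt_mul_left hlt (hw k hk)⟩

section IdenticallyDistributed

variable {Ω E : Type*} [MeasurableSpace Ω] [MeasurableSpace E] {μ : Measure Ω}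
  {e : ℕ → Ω → E}

theorem measure_biUnion_range_preimage_le (hemeas : ∀ n, Measurable (e n))
    (hident : ∀ n, μ.map (e n) = μ.map (e 0)) {B : Set E} (hB : MeasurableSet B) (m : ℕ) :
    μ (⋃ k ∈ Finset.range m, e k ⁻¹' B) ≤ m * μ (e 0 ⁻¹' B) := by
  have hsame : ∀ k, μ (e k ⁻¹' B) = μ (e 0 ⁻¹' B) := fun k => by
    rw [← Measure.map_apply (hemeas k) hB, ← Measure.map_apply (hemeas 0) hB, hident k]
  calc μ (⋃ k ∈ Finset.range m, e k ⁻¹' B)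
      ≤ ∑ k ∈ Finset.range m, μ (e k ⁻¹' B) := measure_biUnion_finset_le _ _
    _ = m * μ (e 0 ⁻¹' B) := by simp [hsame]

theorem measure_mul_weightedSum_lt_le (hemeas : ∀ n, Measurable (e n))
    (hident : ∀ n, μ.map (e n) = μ.map (e 0)) {θ₁ θ₂ : E → ℝ} (hθ₁ : Measurable θ₁)
    (hθ₂ : Measurable θ₂) (X : ℕ → Ω → ℕ) (T : Ω → ℕ) (c : ℝ) (m : ℕ) :
    μ {ω | c * ∑ k ∈ Finset.range (T ω), (X k ω : ℝ) * θ₁ (e k ω) <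
        ∑ k ∈ Finset.range (T ω), (X k ω : ℝ) * θ₂ (e k ω) ∧ T ω < m} ≤
      m * μ {ω | c * θ₁ (e 0 ω) < θ₂ (e 0 ω)} := by
  refine le_trans (measure_mono ?_) (measure_biUnion_range_preimage_le hemeas hident
    (measurableSet_lt (hθ₁.const_mul c) hθ₂) m)
  rintro ω ⟨hlt, hTm⟩
  obtain ⟨k, hk, hbad⟩ :=
    Finset.exists_mul_lt_of_mul_sum_lt (fun k _ => Nat.cast_nonneg (X k ω)) hlt
  exact mem_biUnion (Finset.mem_range.2 ((Finset.mem_range.1 hk).trans hTm)) hbad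

end IdenticallyDistributed

theorem natCast_floor_add_one_isBigO {ι : Type*} {l : Filter ι} {u : ι → ℝ}
    (hu : ∀ᶠ i in l, 1 ≤ u i) : (fun i => ((⌊u i⌋₊ + 1 : ℕ) : ℝ)) =O[l] u := by
  refine IsBigO.of_bound 2 (hu.mono fun i hi => ?_)
  have hfloor := Nat.floor_le (zero_le_one.trans hi)
  rw [Real.norm_of_nonneg (Nat.cast_nonneg _), Real.norm_of_nonneg (zero_le_one.trans hi)]
  push_cast
  linarith

theorem log_rpow_rpow_isBigO {ε : ℝ} (hε : 0 < ε) (s : ℝ) :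
    (fun x : ℝ => log (x ^ ε) ^ s) =O[atTop] fun x => log x ^ s := by
  refine IsBigO.of_bound (ε ^ s) ?_
  filter_upwards [eventually_ge_atTop 1] with x hx
  rw [log_rpow (zero_lt_one.trans_le hx), mul_rpow hε.le (log_nonneg hx),
    norm_mul, Real.norm_of_nonneg (rpow_nonneg hε.le s)]

theorem natCast_floor_log_rpow_mul_isLittleO {α ε : ℝ} (hα : 0 < α) (hε : 0 < ε) {g : ℝ → ℝ}
    (hg : g =o[atTop] fun y => log y ^ (-(3 + α))) :
    (fun x : ℝ => ((⌊log x ^ (2 + α)⌋₊ + 1 : ℕ) : ℝ) * g (x ^ ε)) =o[atTop]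
      fun x => (log x)⁻¹ := by
  have hm : (fun x : ℝ => ((⌊log x ^ (2 + α)⌋₊ + 1 : ℕ) : ℝ)) =O[atTop] fun x => log x ^ (2 + α) :=
    natCast_floor_add_one_isBigO <| (tendsto_log_atTop.eventually_ge_atTop 1).mono
      fun x hx => one_le_rpow hx (by linarith)
  have htail : (fun x : ℝ => g (x ^ ε)) =o[atTop] fun x => log x ^ (-(3 + α)) :=
    (hg.comp_tendsto (tendsto_rpow_atTop hε)).trans_isBigO (log_rpow_rpow_isBigO hε _)
  have hprod : (fun x : ℝ => log x ^ (2 + α) * log x ^ (-(3 + α))) =ᶠ[atTop]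
      fun x => (log x)⁻¹ := by
    filter_upwards [tendsto_log_atTop.eventually_gt_atTop 0] with x hx
    rw [← rpow_add hx, show 2 + α + -(3 + α) = -1 by ring, rpow_neg_one]
  exact (hm.mul_isLittleO htail).trans_isBigO hprod.isBigO

theorem weighted_total_progeny_second_moment_event_general
    {Ω : Type*} [MeasurableSpace Ω] (μ : Measure Ω) [IsProbabilityMeasure μ]
    {E : Type*} [MeasurableSpace E]
    -- IID environment
    (e : ℕ → Ω → E) (hemeas : ∀ n, Measurable (e n))
    (hident : ∀ n, μ.map (e n) = μ.map (e 0))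
    -- conditional offspring distribution of type-1 particles and its moments
    (p : E → ℕ × ℕ → ℝ)
    (hpmeas : ∀ ij, Measurable fun a => p a ij)
    (Θ1 Θ2 : E → ℝ)
    (hΘ1 : ∀ a, Θ1 a = ∑' ij : ℕ × ℕ, (ij.2 : ℝ) * p a ij)
    (hΘ2 : ∀ a, Θ2 a = ∑' ij : ℕ × ℕ, (ij.2 : ℝ) * ((ij.2 : ℝ) - 1) * p a ij)
    -- the type-1 population process
    (X : ℕ → Ω → ℕ)
    (T : Ω → ℕ)
    (S1 : Ω → ℝ) (hS1 : ∀ ω, S1 ω = ∑ k ∈ Finset.range (T ω), (X k ω : ℝ) * Θ1 (e k ω))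
    (S2 : Ω → ℝ) (hS2 : ∀ ω, S2 ω = ∑ k ∈ Finset.range (T ω), (X k ω : ℝ) * Θ2 (e k ω))
    -- tail condition on `θ₂/θ₁`, for some `α > 0`
    (α : ℝ) (hα : 0 < α)
    (hlambda : (fun x : ℝ => (μ {ω | x * Θ1 (e 0 ω) < Θ2 (e 0 ω)}).toReal)
      =o[atTop] fun x : ℝ => Real.log x ^ (-(3 + α)))
    (ε : ℝ) (hε : 0 < ε) :
    (fun n : ℕ =>
        (μ {ω | (n : ℝ) ^ ε * S1 ω < S2 ω ∧ (T ω : ℝ) ≤ Real.log n ^ (2 + α)}).toReal)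
      =o[atTop] fun n : ℕ => (Real.log n)⁻¹ := by
  have hΘ1m : Measurable Θ1 := funext hΘ1 ▸ Measurable.tsum fun ij => (hpmeas ij).const_mul _
  have hΘ2m : Measurable Θ2 := funext hΘ2 ▸ Measurable.tsum fun ij => (hpmeas ij).const_mul _
  have hbound : ∀ n : ℕ,
      ‖(μ {ω | (n : ℝ) ^ ε * S1 ω < S2 ω ∧ (T ω : ℝ) ≤ Real.log n ^ (2 + α)}).toReal‖ ≤
        ((⌊log n ^ (2 + α)⌋₊ + 1 : ℕ) : ℝ) *
          (μ {ω | (n : ℝ) ^ ε * Θ1 (e 0 ω) < Θ2 (e 0 ω)}).toReal := by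
    intro n
    have hsub : {ω | (n : ℝ) ^ ε * S1 ω < S2 ω ∧ (T ω : ℝ) ≤ Real.log n ^ (2 + α)} ⊆
        {ω | (n : ℝ) ^ ε * ∑ k ∈ Finset.range (T ω), (X k ω : ℝ) * Θ1 (e k ω) <
          ∑ k ∈ Finset.range (T ω), (X k ω : ℝ) * Θ2 (e k ω) ∧
            T ω < ⌊log n ^ (2 + α)⌋₊ + 1} := fun ω ⟨hlt, hTle⟩ =>
      ⟨hS1 ω ▸ hS2 ω ▸ hlt, Nat.lt_succ_of_le (Nat.le_floor hTle)⟩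
    have hle := (measure_mono hsub).trans
      (measure_mul_weightedSum_lt_le hemeas hident hΘ1m hΘ2m X T _ _ (μ := μ))
    rw [Real.norm_of_nonneg ENNReal.toReal_nonneg,
      ← ENNReal.toReal_natCast (⌊log n ^ (2 + α)⌋₊ + 1),
      ← ENNReal.toReal_mul]
    exact ENNReal.toReal_mono (ENNReal.mul_ne_top (ENNReal.natCast_ne_top _)
      (measure_ne_top μ _)) hle
  exact (IsBigO.of_norm_le hbound).trans_isLittleO
    ((natCast_floor_log_rpow_mul_isLittleO hα hε hlambda).comp_tendsto tendsto_natCast_atTop_atTop)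

/-- **Lemma 2, second part.** In the IID-environment setting, let
`S_T^{(i)} := Σ_{k<T} X_k θ_{i,k}` for `i = 1,2`. If for some `α > 0`
`P[θ₂ > x θ₁] = o((log x)^{-3-α})` as `x → ∞`, then for every fixed `ε > 0`,
`P[S_T^{(2)} > n^ε S_T^{(1)}; T ≤ (log n)^{2+α}] = o(1/log n)` as `n → ∞`. -/
theorem weighted_total_progeny_second_moment_event
    {Ω : Type*} [MeasurableSpace Ω] (μ : Measure Ω) [IsProbabilityMeasure μ]
    {E : Type*} [MeasurableSpace E]
    -- IID environment
    (e : ℕ → Ω → E) (hemeas : ∀ n, Measurable (e n))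
    (hiid : iIndepFun e μ)
    (hident : ∀ n, μ.map (e n) = μ.map (e 0))
    -- conditional offspring distribution of type-1 particles and its moments
    (p : E → ℕ × ℕ → ℝ) (hp0 : ∀ a ij, 0 ≤ p a ij) (hp1 : ∀ a, (∑' ij : ℕ × ℕ, p a ij) = 1)
    (hpmeas : ∀ ij, Measurable fun a => p a ij)
    (Θ1 Θ2 : E → ℝ)
    (hΘ1 : ∀ a, Θ1 a = ∑' ij : ℕ × ℕ, (ij.2 : ℝ) * p a ij)
    (hΘ2 : ∀ a, Θ2 a = ∑' ij : ℕ × ℕ, (ij.2 : ℝ) * ((ij.2 : ℝ) - 1) * p a ij)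
    -- the type-1 population process
    (X : ℕ → Ω → ℕ) (hXmeas : ∀ n, Measurable (X n)) (hX0 : ∀ ω, X 0 ω = 1)
    (T : Ω → ℕ) (hT : ∀ ω, T ω = sInf {n | X n ω = 0})
    (S1 : Ω → ℝ) (hS1 : ∀ ω, S1 ω = ∑ k ∈ Finset.range (T ω), (X k ω : ℝ) * Θ1 (e k ω))
    (S2 : Ω → ℝ) (hS2 : ∀ ω, S2 ω = ∑ k ∈ Finset.range (T ω), (X k ω : ℝ) * Θ2 (e k ω))
    -- tail condition on `θ₂/θ₁`, for some `α > 0`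
    (α : ℝ) (hα : 0 < α)
    (hlambda : (fun x : ℝ => (μ {ω | x * Θ1 (e 0 ω) < Θ2 (e 0 ω)}).toReal)
      =o[atTop] fun x : ℝ => Real.log x ^ (-(3 + α)))
    (ε : ℝ) (hε : 0 < ε) :
    (fun n : ℕ =>
        (μ {ω | (n : ℝ) ^ ε * S1 ω < S2 ω ∧ (T ω : ℝ) ≤ Real.log n ^ (2 + α)}).toReal)
      =o[atTop] fun n : ℕ => (Real.log n)⁻¹ :=
  weighted_total_progeny_second_moment_event_general μ e hemeas hident p hpmeas Θ1 Θ2 hΘ1 hΘ2 X T S1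
    hS1 S2 hS2 α hα hlambda ε hε
end

section
/- Let Y be a nonnegative random variable such that P[Y > x] ~ K / log x as x → ∞ for some constant K > 0. Then E[1 − e^{−λY}] ~ K / log(1/λ) as λ → 0⁺. -/
open MeasureTheory Filter Real Set
open scoped Topology

/-!
Write `T x = P[Y > x]` and `F λ = E[1 - e^{-λY}]`. Splitting the expectation on `{Y > x}` and
using `1 - e^{-t} ≤ min 1 t` gives, for every `A > 0` and `0 < α < 1`,
`(1 - e^{-A}) T (A/λ) ≤ F λ ≤ T (λ^{-α}) + λ^{1-α}`.
Because `log` varies slowly, `T (A/λ) log (1/λ) → K`, while `T (λ^{-α}) log (1/λ) → K/α` and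
`λ^{1-α} log (1/λ) → 0`; letting `A → ∞` and `α → 1` squeezes `F λ log (1/λ)` to `K`.
-/
section LaplaceTail

variable {Ω : Type*} [MeasurableSpace Ω] {μ : Measure Ω} {Y : Ω → ℝ}

lemma integrable_one_sub_exp_neg_mul [IsFiniteMeasure μ] (hY : Measurable Y)
    (hY0 : ∀ ω, 0 ≤ Y ω) {l : ℝ} (hl : 0 ≤ l) :
    Integrable (fun ω => 1 - exp (-l * Y ω)) μ := by
  refine Integrable.mono' (integrable_const 1)
    (measurable_const.sub (hY.const_mul (-l)).exp).aestronglyMeasurable (ae_of_all _ fun ω => ?_)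
  have : exp (-l * Y ω) ≤ 1 := exp_le_one_iff.2 (by nlinarith [hY0 ω])
  rw [norm_of_nonneg (by linarith)]
  linarith [exp_pos (-l * Y ω)]

lemma one_sub_exp_neg_mul_mul_measure_lt_le_integral [IsFiniteMeasure μ] (hY : Measurable Y)
    (hY0 : ∀ ω, 0 ≤ Y ω) {l : ℝ} (hl : 0 ≤ l) (x : ℝ) :
    (1 - exp (-l * x)) * (μ {ω | x < Y ω}).toReal ≤ ∫ ω, 1 - exp (-l * Y ω) ∂μ := by
  have hS : MeasurableSet {ω | x < Y ω} := measurableSet_lt measurable_const hY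
  rw [mul_comm, ← measureReal_def, ← smul_eq_mul, ← integral_indicator_const _ hS]
  refine integral_mono ((integrable_const _).indicator hS)
    (integrable_one_sub_exp_neg_mul hY hY0 hl) fun ω => ?_
  rw [indicator_apply]
  split_ifs with hω
  · have : -l * Y ω ≤ -l * x := by nlinarith [show x < Y ω from hω]
    linarith [exp_le_exp.2 this]
  · simpa using exp_le_one_iff.2 (by nlinarith [hY0 ω] : -l * Y ω ≤ 0)

lemma integral_one_sub_exp_neg_mul_le_measure_lt_add [IsProbabilityMeasure μ]
    (hY : Measurable Y) (hY0 : ∀ ω, 0 ≤ Y ω) {l : ℝ} (hl : 0 ≤ l) {x : ℝ} (hx : 0 ≤ x) :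
    ∫ ω, 1 - exp (-l * Y ω) ∂μ ≤ (μ {ω | x < Y ω}).toReal + l * x := by
  have hS : MeasurableSet {ω | x < Y ω} := measurableSet_lt measurable_const hY
  calc ∫ ω, 1 - exp (-l * Y ω) ∂μ
      ≤ ∫ ω, {ω | x < Y ω}.indicator 1 ω + l * x ∂μ := by
        refine integral_mono (integrable_one_sub_exp_neg_mul hY hY0 hl)
          (((integrable_const _).indicator hS).add (integrable_const _)) fun ω => ?_
        rw [indicator_apply, Pi.one_apply]
        split_ifs with hω
        · nlinarith [exp_pos (-l * Y ω)]
        · nlinarith [add_one_le_exp (-l * Y ω), show Y ω ≤ x from not_lt.1 hω]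
    _ = (μ {ω | x < Y ω}).toReal + l * x := by
        rw [integral_add ((integrable_const _).indicator hS) (integrable_const _), Pi.one_def,
          integral_indicator_const _ hS]
        simp [measureReal_def]

end LaplaceTail

section SlowVariation

variable {T : ℝ → ℝ} {K : ℝ}

lemma tendsto_comp_const_mul_mul_log (hT : Tendsto (fun x => T x * log x) atTop (𝓝 K))
    {c : ℝ} (hc : 0 < c) : Tendsto (fun x => T (c * x) * log x) atTop (𝓝 K) := by
  have hc_mul : Tendsto (c * ·) atTop atTop := tendsto_id.const_mul_atTop hc
  have hlog : Tendsto (fun x => log (c * x)) atTop atTop := tendsto_log_atTop.comp hc_mul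
  have hscaled : Tendsto (fun x => T (c * x) * log (c * x)) atTop (𝓝 K) := hT.comp hc_mul
  have hT_zero : Tendsto (fun x => T (c * x)) atTop (𝓝 0) := by
    refine (hscaled.div_atTop hlog).congr' ?_
    filter_upwards [hlog.eventually_gt_atTop 0] with x hx
    field_simp
  have hlim := hscaled.sub (hT_zero.mul_const (log c))
  rw [zero_mul, sub_zero] at hlim
  refine hlim.congr' ?_
  filter_upwards [eventually_gt_atTop 0] with x hx
  rw [log_mul hc.ne' hx.ne']
  ring

lemma tendsto_comp_rpow_mul_log (hT : Tendsto (fun x => T x * log x) atTop (𝓝 K))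
    {α : ℝ} (hα : 0 < α) : Tendsto (fun x => T (x ^ α) * log x) atTop (𝓝 (K / α)) := by
  refine ((hT.comp (tendsto_rpow_atTop hα)).div_const α).congr' ?_
  filter_upwards [eventually_gt_atTop 0] with x hx
  simp only [Function.comp_apply, log_rpow hx]
  field_simp

end SlowVariation

lemma tendsto_rpow_div_self_mul_log {α : ℝ} (hα : α < 1) :
    Tendsto (fun x : ℝ => x ^ α / x * log x) atTop (𝓝 0) := by
  refine (isLittleO_log_rpow_atTop (sub_pos.2 hα)).tendsto_div_nhds_zero.congr' ?_
  filter_upwards [eventually_gt_atTop 0] with x hx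
  rw [rpow_sub hx, rpow_one]
  field_simp

theorem tendsto_mul_log_of_tail_bounds {T F : ℝ → ℝ} {K : ℝ}
    (hT : Tendsto (fun x => T x * log x) atTop (𝓝 K))
    (hlower : ∀ A > 0, ∀ᶠ x in atTop, (1 - exp (-A)) * T (A * x) ≤ F x)
    (hupper : ∀ α ∈ Ioo (0 : ℝ) 1, ∀ᶠ x in atTop, F x ≤ T (x ^ α) + x ^ α / x) :
    Tendsto (fun x => F x * log x) atTop (𝓝 K) := by
  refine tendsto_order.2 ⟨fun a ha => ?_, fun b hb => ?_⟩
  · have hK : Tendsto (fun A => (1 - exp (-A)) * K) atTop (𝓝 K) := by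
      simpa using (tendsto_exp_neg_atTop_nhds_zero.const_sub 1).mul_const K
    obtain ⟨A, haA, hA⟩ := ((hK.eventually (lt_mem_nhds ha)).and (eventually_gt_atTop 0)).exists
    have hlim := (tendsto_comp_const_mul_mul_log hT hA).const_mul (1 - exp (-A))
    filter_upwards [hlim.eventually (lt_mem_nhds haA), hlower A hA, eventually_ge_atTop 1]
      with x hx hFx hx1
    calc a < (1 - exp (-A)) * (T (A * x) * log x) := hx
      _ ≤ F x * log x := by
        rw [← mul_assoc]
        exact mul_le_mul_of_nonneg_right hFx (log_nonneg hx1)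
  · have hK : Tendsto (fun α : ℝ => K / α) (𝓝 1) (𝓝 (K / 1)) :=
      tendsto_const_nhds.div tendsto_id one_ne_zero
    rw [div_one] at hK
    obtain ⟨α, hαb, hα⟩ := (((hK.mono_left nhdsWithin_le_nhds).eventually (gt_mem_nhds hb)).and
      (Ioo_mem_nhdsLT (zero_lt_one' ℝ))).exists
    have hlim := (tendsto_comp_rpow_mul_log hT hα.1).add (tendsto_rpow_div_self_mul_log hα.2)
    rw [add_zero] at hlim
    filter_upwards [hlim.eventually (gt_mem_nhds hαb), hupper α hα, eventually_ge_atTop 1]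
      with x hx hFx hx1
    calc F x * log x ≤ (T (x ^ α) + x ^ α / x) * log x :=
          mul_le_mul_of_nonneg_right hFx (log_nonneg hx1)
      _ = T (x ^ α) * log x + x ^ α / x * log x := add_mul _ _ _
      _ < b := hx

theorem tauberian_slowly_varying_tail_general
    {Ω : Type*} [MeasurableSpace Ω] (μ : Measure Ω) [IsProbabilityMeasure μ]
    (Y : Ω → ℝ) (hYmeas : Measurable Y) (hYnonneg : ∀ ω, 0 ≤ Y ω)
    (K : ℝ)
    (htail : Tendsto (fun x : ℝ => (μ {ω | x < Y ω}).toReal * Real.log x) atTop (𝓝 K)) :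
    Tendsto (fun l : ℝ => (∫ ω, (1 - Real.exp (-l * Y ω)) ∂μ) * Real.log (1 / l))
      (𝓝[>] 0) (𝓝 K) := by
  have key : Tendsto (fun x => (∫ ω, 1 - exp (-x⁻¹ * Y ω) ∂μ) * log x) atTop (𝓝 K) := by
    refine tendsto_mul_log_of_tail_bounds (T := fun x => (μ {ω | x < Y ω}).toReal) htail
      (fun A _ => ?_) (fun α _ => ?_) <;> filter_upwards [eventually_gt_atTop 0] with x hx
    · have h := one_sub_exp_neg_mul_mul_measure_lt_le_integral (μ := μ) hYmeas hYnonneg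
        (inv_nonneg.2 hx.le) (A * x)
      rwa [show -x⁻¹ * (A * x) = -A by field_simp] at h
    · have h := integral_one_sub_exp_neg_mul_le_measure_lt_add (μ := μ) hYmeas hYnonneg
        (inv_nonneg.2 hx.le) (rpow_nonneg hx.le α)
      rwa [inv_mul_eq_div] at h
  refine (key.comp tendsto_inv_nhdsGT_zero).congr fun l => ?_
  simp only [Function.comp_apply, inv_inv, one_div]

/-- If `Y ≥ 0` has tail `P[Y > x] ~ K / log x` as `x → ∞` (with `K > 0`),
then `E[1 - e^{-λ Y}] ~ K / log (1/λ)` as `λ → 0⁺`. -/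
theorem tauberian_slowly_varying_tail
    {Ω : Type*} [MeasurableSpace Ω] (μ : Measure Ω) [IsProbabilityMeasure μ]
    (Y : Ω → ℝ) (hYmeas : Measurable Y) (hYnonneg : ∀ ω, 0 ≤ Y ω)
    (K : ℝ) (hK : 0 < K)
    (htail : Tendsto (fun x : ℝ => (μ {ω | x < Y ω}).toReal * Real.log x) atTop (𝓝 K)) :
    Tendsto (fun l : ℝ => (∫ ω, (1 - Real.exp (-l * Y ω)) ∂μ) * Real.log (1 / l))
      (𝓝[>] 0) (𝓝 K) :=
  tauberian_slowly_varying_tail_general μ Y hYmeas hYnonneg K htail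
end
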